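/- arXiv:0901.0874 — 2 statements merged into one kernel-verified Lean document; each statement's English description precedes it below -/
import Mathlib

section
/- At the inphase equilibrium (r_t = 0, φ = 0, r_l = r), the Jacobian of the transverse (r_t, φ)-subsystem is J_in = [[u + 6r² − 5r⁴ − κ₁, κ₂ r], [2σ r_m² r − 2σ r³ − 4κ₂/r, −2κ₁]], with trace tr(J_in) = u + 6r² − 5r⁴ − 3κ₁ and determinant det(J_in) = −2(u + 6r² − 5r⁴)κ₁ − 2σ r²(r_m² − r²)κ₂ + 2κ₁² + 4κ₂². -/
/-- Right-hand side of the `r_t` equation of the fast constrained system. -/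
noncomputable def Frt (u κ₁ κ₂ rl rt φ : ℝ) : ℝ :=
  u * rt + 6 * rl ^ 2 * rt + 2 * rt ^ 3 - 5 * rl ^ 4 * rt - 10 * rl ^ 2 * rt ^ 3 - rt ^ 5
    - κ₁ * rt * Real.cos φ + κ₂ * rl * Real.sin φ

/-- Right-hand side of the `φ` equation of the fast constrained system. -/
noncomputable def Fphi (σ rm κ₁ κ₂ rl rt φ : ℝ) : ℝ :=
  2 * σ * rm ^ 2 * rl * rt - 2 * σ * rl * rt * (rl ^ 2 + rt ^ 2)
    - 2 * κ₁ * ((rl ^ 2 + rt ^ 2) / (rl ^ 2 - rt ^ 2)) * Real.sin φ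
    - 4 * κ₂ * (rl * rt / (rl ^ 2 - rt ^ 2)) * Real.cos φ

open Real

theorem hasDerivAt_Frt_rt (u κ₁ κ₂ rl rt φ : ℝ) :
    HasDerivAt (fun x => Frt u κ₁ κ₂ rl x φ)
      (u + 6 * rl ^ 2 + 6 * rt ^ 2 - 5 * rl ^ 4 - 30 * rl ^ 2 * rt ^ 2 - 5 * rt ^ 4
        - κ₁ * cos φ) rt := by
  have h1 := hasDerivAt_id' rt
  have h3 := hasDerivAt_pow 3 rt
  have h5 := hasDerivAt_pow 5 rt
  have := (((((((h1.const_mul u).fun_add (h1.const_mul (6 * rl ^ 2))).fun_add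
    (h3.const_mul 2)).fun_sub (h1.const_mul (5 * rl ^ 4))).fun_sub
    (h3.const_mul (10 * rl ^ 2))).fun_sub h5).fun_sub (h1.const_mul (κ₁ * cos φ))).add_const
    (κ₂ * rl * sin φ)
  refine (this.congr_deriv (by push_cast; ring)).congr_of_eventuallyEq (.of_forall fun x => ?_)
  simp only [Frt]; ring

theorem hasDerivAt_Frt_phi (u κ₁ κ₂ rl rt φ : ℝ) :
    HasDerivAt (fun ψ => Frt u κ₁ κ₂ rl rt ψ) (κ₁ * rt * sin φ + κ₂ * rl * cos φ) φ := by
  have := (((hasDerivAt_cos φ).const_mul (κ₁ * rt)).const_sub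
    (u * rt + 6 * rl ^ 2 * rt + 2 * rt ^ 3 - 5 * rl ^ 4 * rt - 10 * rl ^ 2 * rt ^ 3
      - rt ^ 5)).fun_add ((hasDerivAt_sin φ).const_mul (κ₂ * rl))
  exact this.congr_deriv (by ring)

theorem hasDerivAt_Fphi_phi (σ rm κ₁ κ₂ rl rt φ : ℝ) :
    HasDerivAt (fun ψ => Fphi σ rm κ₁ κ₂ rl rt ψ)
      (-2 * κ₁ * ((rl ^ 2 + rt ^ 2) / (rl ^ 2 - rt ^ 2)) * cos φ
        + 4 * κ₂ * (rl * rt / (rl ^ 2 - rt ^ 2)) * sin φ) φ := by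
  have := (((hasDerivAt_sin φ).const_mul
    (2 * κ₁ * ((rl ^ 2 + rt ^ 2) / (rl ^ 2 - rt ^ 2)))).const_sub
    (2 * σ * rm ^ 2 * rl * rt - 2 * σ * rl * rt * (rl ^ 2 + rt ^ 2))).fun_sub
    ((hasDerivAt_cos φ).const_mul (4 * κ₂ * (rl * rt / (rl ^ 2 - rt ^ 2))))
  exact this.congr_deriv (by ring)

theorem hasDerivAt_Fphi_rt (σ rm κ₁ κ₂ rl rt φ : ℝ) (h : rl ^ 2 ≠ rt ^ 2) :
    HasDerivAt (fun x => Fphi σ rm κ₁ κ₂ rl x φ)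
      (2 * σ * rm ^ 2 * rl - 2 * σ * rl * (rl ^ 2 + 3 * rt ^ 2)
        - 8 * κ₁ * rl ^ 2 * rt / (rl ^ 2 - rt ^ 2) ^ 2 * sin φ
        - 4 * κ₂ * rl * (rl ^ 2 + rt ^ 2) / (rl ^ 2 - rt ^ 2) ^ 2 * cos φ) rt := by
  have hden : rl ^ 2 - rt ^ 2 ≠ 0 := sub_ne_zero.mpr h
  have h1 := hasDerivAt_id' rt
  have h2 := hasDerivAt_pow 2 rt
  have hsum := h2.const_add (rl ^ 2)
  have hdiff := h2.const_sub (rl ^ 2)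
  have hq1 := hsum.fun_div hdiff hden
  have hq2 := (h1.const_mul rl).fun_div hdiff hden
  have := ((((h1.const_mul (2 * σ * rm ^ 2 * rl)).fun_sub
    ((h1.const_mul (2 * σ * rl)).fun_mul hsum)).fun_sub
    (hq1.const_mul (2 * κ₁ * sin φ))).fun_sub (hq2.const_mul (4 * κ₂ * cos φ)))
  refine (this.congr_deriv (by push_cast; field_simp; ring)).congr_of_eventuallyEq
    (.of_forall fun x => ?_)
  simp only [Fphi]; ring

theorem stmt_8_general (u σ rm κ₁ κ₂ r : ℝ) (hr : 0 < r) :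
    HasDerivAt (fun rt => Frt u κ₁ κ₂ r rt 0) (u + 6 * r ^ 2 - 5 * r ^ 4 - κ₁) 0 ∧
    HasDerivAt (fun φ => Frt u κ₁ κ₂ r 0 φ) (κ₂ * r) 0 ∧
    HasDerivAt (fun rt => Fphi σ rm κ₁ κ₂ r rt 0)
      (2 * σ * rm ^ 2 * r - 2 * σ * r ^ 3 - 4 * κ₂ / r) 0 ∧
    HasDerivAt (fun φ => Fphi σ rm κ₁ κ₂ r 0 φ) (-2 * κ₁) 0 ∧
    (u + 6 * r ^ 2 - 5 * r ^ 4 - κ₁) + (-2 * κ₁) = u + 6 * r ^ 2 - 5 * r ^ 4 - 3 * κ₁ ∧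
    (u + 6 * r ^ 2 - 5 * r ^ 4 - κ₁) * (-2 * κ₁)
        - (κ₂ * r) * (2 * σ * rm ^ 2 * r - 2 * σ * r ^ 3 - 4 * κ₂ / r)
      = -2 * (u + 6 * r ^ 2 - 5 * r ^ 4) * κ₁ - 2 * σ * r ^ 2 * (rm ^ 2 - r ^ 2) * κ₂
        + 2 * κ₁ ^ 2 + 4 * κ₂ ^ 2 := by
  have hr0 : r ≠ 0 := hr.ne'
  have hr2 : r ^ 2 ≠ (0 : ℝ) ^ 2 := by simpa using hr0
  refine ⟨?_, ?_, ?_, ?_, by ring, by field_simp; ring⟩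
  · simpa using hasDerivAt_Frt_rt u κ₁ κ₂ r 0 0
  · simpa using hasDerivAt_Frt_phi u κ₁ κ₂ r 0 0
  · convert hasDerivAt_Fphi_rt σ rm κ₁ κ₂ r 0 0 hr2 using 1
    simp only [cos_zero, sin_zero]; field_simp; ring
  · convert hasDerivAt_Fphi_phi σ rm κ₁ κ₂ r 0 0 using 1
    simp only [cos_zero, sin_zero]; field_simp; ring

/-- Jacobian of the transverse `(r_t, φ)` subsystem at the inphase equilibrium, together
with its trace and determinant. -/
theorem stmt_8 (u σ rm κ₁ κ₂ r : ℝ) (hr : 0 < r)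
    (hu : u = r ^ 4 - 2 * r ^ 2 - 2 * κ₁) :
    HasDerivAt (fun rt => Frt u κ₁ κ₂ r rt 0) (u + 6 * r ^ 2 - 5 * r ^ 4 - κ₁) 0 ∧
    HasDerivAt (fun φ => Frt u κ₁ κ₂ r 0 φ) (κ₂ * r) 0 ∧
    HasDerivAt (fun rt => Fphi σ rm κ₁ κ₂ r rt 0)
      (2 * σ * rm ^ 2 * r - 2 * σ * r ^ 3 - 4 * κ₂ / r) 0 ∧
    HasDerivAt (fun φ => Fphi σ rm κ₁ κ₂ r 0 φ) (-2 * κ₁) 0 ∧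
    (u + 6 * r ^ 2 - 5 * r ^ 4 - κ₁) + (-2 * κ₁) = u + 6 * r ^ 2 - 5 * r ^ 4 - 3 * κ₁ ∧
    (u + 6 * r ^ 2 - 5 * r ^ 4 - κ₁) * (-2 * κ₁)
        - (κ₂ * r) * (2 * σ * rm ^ 2 * r - 2 * σ * r ^ 3 - 4 * κ₂ / r)
      = -2 * (u + 6 * r ^ 2 - 5 * r ^ 4) * κ₁ - 2 * σ * r ^ 2 * (rm ^ 2 - r ^ 2) * κ₂
        + 2 * κ₁ ^ 2 + 4 * κ₂ ^ 2 :=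
  stmt_8_general u σ rm κ₁ κ₂ r hr
end

section
/- At the antiphase equilibrium (r_t = 0, φ = π, r_l = r with u = r⁴ − 2r² + 2κ₁), the Jacobian of the transverse (r_t, φ)-subsystem is J_anti = [[u + 6r² − 5r⁴ + κ₁, −κ₂ r], [2σ r_m² r − 2σ r³ + 4κ₂/r, 2κ₁]], with tr(J_anti) = u + 6r² − 5r⁴ + 3κ₁ and det(J_anti) = 2(u + 6r² − 5r⁴)κ₁ + 2σ r²(r_m² − r²)κ₂ + 2κ₁² + 4κ₂². -/
open Real

theorem hasDerivAt_Fphi_rt_zero (σ rm κ₁ κ₂ rl φ : ℝ) (hrl : rl ≠ 0) :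
    HasDerivAt (fun x => Fphi σ rm κ₁ κ₂ rl x φ)
      (2 * σ * rm ^ 2 * rl - 2 * σ * rl ^ 3 - 4 * κ₂ * cos φ / rl) 0 := by
  have h1 := hasDerivAt_id' (0 : ℝ)
  have h2 := hasDerivAt_pow 2 (0 : ℝ)
  have hden : rl ^ 2 - (0 : ℝ) ^ 2 ≠ 0 := by simpa using hrl
  have hsum := (h2.const_add (rl ^ 2)).div (h2.const_sub (rl ^ 2)) hden
  have hprod := (h1.const_mul rl).div (h2.const_sub (rl ^ 2)) hden
  refine ((((h1.const_mul (2 * σ * rm ^ 2 * rl)).sub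
    ((h1.const_mul (2 * σ * rl)).mul (h2.const_add (rl ^ 2)))).sub
    ((hsum.const_mul (2 * κ₁)).mul_const (sin φ))).sub
    ((hprod.const_mul (4 * κ₂)).mul_const (cos φ))).congr_deriv ?_
  field_simp
  ring

theorem stmt_9_general (u σ rm κ₁ κ₂ r : ℝ) (hr : 0 < r) :
    HasDerivAt (fun rt => Frt u κ₁ κ₂ r rt Real.pi) (u + 6 * r ^ 2 - 5 * r ^ 4 + κ₁) 0 ∧
    HasDerivAt (fun φ => Frt u κ₁ κ₂ r 0 φ) (-(κ₂ * r)) Real.pi ∧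
    HasDerivAt (fun rt => Fphi σ rm κ₁ κ₂ r rt Real.pi)
      (2 * σ * rm ^ 2 * r - 2 * σ * r ^ 3 + 4 * κ₂ / r) 0 ∧
    HasDerivAt (fun φ => Fphi σ rm κ₁ κ₂ r 0 φ) (2 * κ₁) Real.pi ∧
    (u + 6 * r ^ 2 - 5 * r ^ 4 + κ₁) + 2 * κ₁ = u + 6 * r ^ 2 - 5 * r ^ 4 + 3 * κ₁ ∧
    (u + 6 * r ^ 2 - 5 * r ^ 4 + κ₁) * (2 * κ₁)
        - (-(κ₂ * r)) * (2 * σ * rm ^ 2 * r - 2 * σ * r ^ 3 + 4 * κ₂ / r)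
      = 2 * (u + 6 * r ^ 2 - 5 * r ^ 4) * κ₁ + 2 * σ * r ^ 2 * (rm ^ 2 - r ^ 2) * κ₂
        + 2 * κ₁ ^ 2 + 4 * κ₂ ^ 2 := by
  have hr0 : r ≠ 0 := hr.ne'
  refine ⟨?_, ?_, ?_, ?_, by ring, by field_simp; ring⟩
  · convert hasDerivAt_Frt_rt u κ₁ κ₂ r 0 π using 1
    simp only [cos_pi]
    ring
  · convert hasDerivAt_Frt_phi u κ₁ κ₂ r 0 π using 1
    simp only [sin_pi, cos_pi]
    ring
  · convert hasDerivAt_Fphi_rt_zero σ rm κ₁ κ₂ r π hr0 using 1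
    simp only [cos_pi]
    ring
  · convert hasDerivAt_Fphi_phi σ rm κ₁ κ₂ r 0 π using 1
    field_simp
    simp only [sin_pi, cos_pi]
    ring

/-- Jacobian of the transverse `(r_t, φ)` subsystem at the antiphase equilibrium, together
with its trace and determinant. -/
theorem stmt_9 (u σ rm κ₁ κ₂ r : ℝ) (hr : 0 < r)
    (hu : u = r ^ 4 - 2 * r ^ 2 + 2 * κ₁) :
    HasDerivAt (fun rt => Frt u κ₁ κ₂ r rt Real.pi) (u + 6 * r ^ 2 - 5 * r ^ 4 + κ₁) 0 ∧
    HasDerivAt (fun φ => Frt u κ₁ κ₂ r 0 φ) (-(κ₂ * r)) Real.pi ∧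
    HasDerivAt (fun rt => Fphi σ rm κ₁ κ₂ r rt Real.pi)
      (2 * σ * rm ^ 2 * r - 2 * σ * r ^ 3 + 4 * κ₂ / r) 0 ∧
    HasDerivAt (fun φ => Fphi σ rm κ₁ κ₂ r 0 φ) (2 * κ₁) Real.pi ∧
    (u + 6 * r ^ 2 - 5 * r ^ 4 + κ₁) + 2 * κ₁ = u + 6 * r ^ 2 - 5 * r ^ 4 + 3 * κ₁ ∧
    (u + 6 * r ^ 2 - 5 * r ^ 4 + κ₁) * (2 * κ₁)
        - (-(κ₂ * r)) * (2 * σ * rm ^ 2 * r - 2 * σ * r ^ 3 + 4 * κ₂ / r)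
      = 2 * (u + 6 * r ^ 2 - 5 * r ^ 4) * κ₁ + 2 * σ * r ^ 2 * (rm ^ 2 - r ^ 2) * κ₂
        + 2 * κ₁ ^ 2 + 4 * κ₂ ^ 2 :=
  stmt_9_general u σ rm κ₁ κ₂ r hr
end
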